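/- Let G=(V,E,W) be a finite weighted undirected graph with |V| ≥ 2 and d_i > 0 for every vertex i, and let T be a partitioning tree of G such that 2·V_α ≤ V_G for every non-root node α of T (the assumption made without loss of generality in the paper's proof). Then the normalized structural entropy ρ^T(G) = H^T(G)/H^1(G) satisfies ρ^T(G) ≥ Φ(G), where Φ(G) is the conductance of G. -/

import Mathlib

open Finset

variable {V : Type*} [Fintype V] [DecidableEq V]

/-- Degree of a vertex in a finite weighted undirected graph. -/
noncomputable def deg (W : V → V → ℝ) (i : V) : ℝ := ∑ j, W i j

/-- Volume of a vertex subset. -/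
noncomputable def vol (W : V → V → ℝ) (S : Finset V) : ℝ := ∑ i ∈ S, deg W i

/-- Cut of a vertex subset. -/
noncomputable def cut (W : V → V → ℝ) (S : Finset V) : ℝ := ∑ i ∈ S, ∑ j ∈ Sᶜ, W i j

/-- A partitioning tree of a graph on vertex set `V`. -/
structure PartTree (V : Type*) [Fintype V] [DecidableEq V] where
  Node : Type
  [fin : Fintype Node]
  [deq : DecidableEq Node]
  root : Node
  parent : Node → Node
  depth : Node → ℕ
  depth_root : depth root = 0
  depth_parent : ∀ α, α ≠ root → depth α = depth (parent α) + 1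
  label : Node → Finset V
  label_root : label root = Finset.univ
  label_nonempty : ∀ α, (label α).Nonempty
  label_children : ∀ β : Node,
    (Finset.univ.filter (fun α => α ≠ root ∧ parent α = β)).Nonempty →
    label β = (Finset.univ.filter (fun α => α ≠ root ∧ parent α = β)).biUnion label
  label_disjoint : ∀ α β : Node, α ≠ root → β ≠ root → parent α = parent β → α ≠ β →
    Disjoint (label α) (label β)
  leaf_label : ∀ α : Node,
    Finset.univ.filter (fun γ => γ ≠ root ∧ parent γ = α) = ∅ → ∃ v : V, label α = {v}
  leaf_unique : ∀ v : V, ∃! α : Node,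
    Finset.univ.filter (fun γ => γ ≠ root ∧ parent γ = α) = ∅ ∧ label α = {v}

attribute [instance] PartTree.fin PartTree.deq

/-- Children of a node. -/
def PartTree.children (T : PartTree V) (β : T.Node) : Finset T.Node :=
  Finset.univ.filter (fun α => α ≠ T.root ∧ T.parent α = β)

/-- Structural entropy of the graph with weights `W` on the partitioning tree `T`. -/
noncomputable def SE (W : V → V → ℝ) (T : PartTree V) : ℝ :=
  ∑ α ∈ Finset.univ.filter (fun α => α ≠ T.root),
    -(cut W (T.label α) / vol W Finset.univ) *
      Real.logb 2 (vol W (T.label α) / vol W (T.label (T.parent α)))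

/-- One-dimensional structural entropy. -/
noncomputable def H1 (W : V → V → ℝ) : ℝ :=
  -∑ i : V, (deg W i / vol W Finset.univ) * Real.logb 2 (deg W i / vol W Finset.univ)

/-- Conductance of the graph: minimum over nonempty proper vertex subsets. -/
noncomputable def conductance (W : V → V → ℝ) : ℝ :=
  ⨅ S : {S : Finset V // S.Nonempty ∧ S ≠ Finset.univ},
    cut W S.1 / min (vol W S.1) (vol W (S.1)ᶜ)

set_option linter.unusedSectionVars false

lemma vol_nonneg (W : V → V → ℝ) (hnonneg : ∀ i j, 0 ≤ W i j) (S : Finset V) : 0 ≤ vol W S :=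
  Finset.sum_nonneg fun i _ => Finset.sum_nonneg fun j _ => hnonneg i j

lemma vol_pos (W : V → V → ℝ) (hdeg : ∀ i, 0 < deg W i) {S : Finset V} (hS : S.Nonempty) :
    0 < vol W S := Finset.sum_pos (fun i _ => hdeg i) hS

lemma vol_mono (W : V → V → ℝ) (hdeg : ∀ i, 0 < deg W i) {S T : Finset V} (h : S ⊆ T) :
    vol W S ≤ vol W T :=
  Finset.sum_le_sum_of_subset_of_nonneg h (fun i _ _ => (hdeg i).le)

lemma cut_nonneg (W : V → V → ℝ) (hnonneg : ∀ i j, 0 ≤ W i j) (S : Finset V) : 0 ≤ cut W S :=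
  Finset.sum_nonneg fun i _ => Finset.sum_nonneg fun j _ => hnonneg i j

lemma vol_add_compl (W : V → V → ℝ) (S : Finset V) :
    vol W S + vol W Sᶜ = vol W Finset.univ := Finset.sum_add_sum_compl S _

lemma mem_children {T : PartTree V} {α β : T.Node} :
    α ∈ T.children β ↔ α ≠ T.root ∧ T.parent α = β := by
  simp [PartTree.children]

lemma label_subset_parent (T : PartTree V) {α : T.Node} (h : α ≠ T.root) :
    T.label α ⊆ T.label (T.parent α) := by
  have hmem : α ∈ T.children (T.parent α) := mem_children.mpr ⟨h, rfl⟩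
  have hne : (T.children (T.parent α)).Nonempty := ⟨α, hmem⟩
  rw [T.label_children _ hne]
  exact Finset.subset_biUnion_of_mem T.label hmem

lemma vol_children (W : V → V → ℝ) (T : PartTree V) {β : T.Node}
    (h : (T.children β).Nonempty) :
    vol W (T.label β) = ∑ α ∈ T.children β, vol W (T.label α) := by
  rw [T.label_children _ h]
  exact Finset.sum_biUnion (fun a ha b hb hab =>
    T.label_disjoint a b (mem_children.mp ha).1 (mem_children.mp hb).1
      ((mem_children.mp ha).2.trans (mem_children.mp hb).2.symm) hab)

noncomputable def PartTree.leafOf (T : PartTree V) (v : V) : T.Node := (T.leaf_unique v).choose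

lemma PartTree.leafOf_spec (T : PartTree V) (v : V) :
    T.children (T.leafOf v) = ∅ ∧ T.label (T.leafOf v) = {v} :=
  (T.leaf_unique v).choose_spec.1

lemma PartTree.leafOf_eq (T : PartTree V) {α : T.Node} {v : V} (h1 : T.children α = ∅)
    (h2 : T.label α = {v}) : α = T.leafOf v :=
  (T.leaf_unique v).choose_spec.2 α ⟨h1, h2⟩

noncomputable def PartTree.vertOf (T : PartTree V) (α : T.Node) : V := (T.label_nonempty α).choose

lemma PartTree.vertOf_mem (T : PartTree V) (α : T.Node) : T.vertOf α ∈ T.label α :=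
  (T.label_nonempty α).choose_spec

lemma PartTree.label_leaf_eq (T : PartTree V) {α : T.Node} (h : T.children α = ∅) :
    T.label α = {T.vertOf α} := by
  obtain ⟨v, hv⟩ := T.leaf_label α h
  have := T.vertOf_mem α
  rw [hv] at this ⊢
  rw [Finset.mem_singleton] at this
  rw [this]


/-- For a finite weighted undirected graph `G = (V, E, W)` with at least two
vertices and positive degrees, and a partitioning tree `T` of `G` in which every non-root node
has volume at most half the total volume (the paper's WLOG assumption), the normalized
structural entropy `ρ^T(G) = H^T(G) / H^1(G)` is at least the conductance `Φ(G)`. -/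
theorem normalized_structural_entropy_ge_conductance
    {V : Type*} [Fintype V] [DecidableEq V] (W : V → V → ℝ)
    (hsymm : ∀ i j, W i j = W j i) (hnonneg : ∀ i j, 0 ≤ W i j)
    (hdiag : ∀ i, W i i = 0)
    (hcard : 2 ≤ Fintype.card V) (hdeg : ∀ i, 0 < deg W i)
    (T : PartTree V)
    (hwlog : ∀ α : T.Node, α ≠ T.root → 2 * vol W (T.label α) ≤ vol W Finset.univ) :
    conductance W ≤ SE W T / H1 W := by
  have hVne : Nonempty V := Fintype.card_pos_iff.mp (by omega)
  have hVG : 0 < vol W Finset.univ := vol_pos W hdeg Finset.univ_nonempty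
  set VG := vol W Finset.univ with hVGdef
  set f : T.Node → ℝ := fun α => Real.logb 2 (vol W (T.label α)) with hf
  set g : T.Node → ℝ := fun α => vol W (T.label α) * f α with hg
  have hvolpos : ∀ α : T.Node, 0 < vol W (T.label α) :=
    fun α => vol_pos W hdeg (T.label_nonempty α)
  -- conductance bound on each non-root node
  have hcond : ∀ α : T.Node, α ≠ T.root →
      conductance W * vol W (T.label α) ≤ cut W (T.label α) := by
    intro α hα
    have hvpos := hvolpos α
    have hne : T.label α ≠ Finset.univ := by
      intro h
      have := hwlog α hα
      rw [h] at this
      linarith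
    have hcompl : vol W (T.label α) ≤ vol W (T.label α)ᶜ := by
      have hsum := vol_add_compl W (T.label α)
      have := hwlog α hα
      linarith
    have hbdd : BddBelow (Set.range fun S : {S : Finset V // S.Nonempty ∧ S ≠ Finset.univ} =>
        cut W S.1 / min (vol W S.1) (vol W (S.1)ᶜ)) := by
      refine ⟨0, ?_⟩
      rintro x ⟨S, rfl⟩
      exact div_nonneg (cut_nonneg W hnonneg _)
        (le_min (vol_nonneg W hnonneg _) (vol_nonneg W hnonneg _))
    have hΦ : conductance W ≤ cut W (T.label α) / vol W (T.label α) := by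
      have h := ciInf_le hbdd (⟨T.label α, T.label_nonempty α, hne⟩ :
        {S : Finset V // S.Nonempty ∧ S ≠ Finset.univ})
      rwa [min_eq_left hcompl] at h
    calc conductance W * vol W (T.label α)
        ≤ (cut W (T.label α) / vol W (T.label α)) * vol W (T.label α) :=
          mul_le_mul_of_nonneg_right hΦ hvpos.le
      _ = cut W (T.label α) := div_mul_cancel₀ _ hvpos.ne'
  -- monotone along tree
  have hfmono : ∀ α : T.Node, α ≠ T.root → f α ≤ f (T.parent α) :=
    fun α hα => Real.logb_le_logb_of_le one_lt_two (hvolpos α)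
      (vol_mono W hdeg (label_subset_parent T hα))
  -- SE rewrite
  have hSE : SE W T = ∑ α ∈ Finset.univ.filter (fun α => α ≠ T.root),
      (cut W (T.label α) / VG) * (f (T.parent α) - f α) := by
    unfold SE
    refine Finset.sum_congr rfl (fun α hα => ?_)
    rw [Real.logb_div (hvolpos α).ne' (hvolpos (T.parent α)).ne']
    ring
  -- telescoping
  have h1 : ∑ α ∈ Finset.univ.filter (fun α => α ≠ T.root),
      vol W (T.label α) * f (T.parent α)
      = ∑ β ∈ Finset.univ.filter (fun β : T.Node => ¬ T.children β = ∅), g β := by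
    rw [← Finset.sum_fiberwise (Finset.univ.filter (fun α => α ≠ T.root)) T.parent
      (fun α => vol W (T.label α) * f (T.parent α))]
    conv_rhs => rw [Finset.sum_filter]
    refine Finset.sum_congr rfl (fun β _ => ?_)
    have hch : (Finset.univ.filter (fun α => α ≠ T.root)).filter (fun α => T.parent α = β)
        = T.children β := by
      rw [Finset.filter_filter]
      rfl
    rw [hch]
    by_cases hb : T.children β = ∅
    · rw [if_neg (by simpa using hb), hb, Finset.sum_empty]
    · rw [if_pos hb]
      have : ∀ α ∈ T.children β, vol W (T.label α) * f (T.parent α)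
          = vol W (T.label α) * f β := by
        intro α hα
        rw [(mem_children.mp hα).2]
      rw [Finset.sum_congr rfl this, ← Finset.sum_mul,
        ← vol_children W T (Finset.nonempty_iff_ne_empty.mpr hb)]
  have h2 : ∑ α ∈ Finset.univ.filter (fun α => α ≠ T.root), vol W (T.label α) * f α
      = (∑ α : T.Node, g α) - g T.root := by
    rw [Finset.filter_ne', ← Finset.sum_erase_add Finset.univ g (Finset.mem_univ T.root)]
    simp [hg]
  have h3 : ∑ β ∈ Finset.univ.filter (fun β : T.Node => ¬ T.children β = ∅), g β
      = (∑ α : T.Node, g α)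
        - ∑ β ∈ Finset.univ.filter (fun β : T.Node => T.children β = ∅), g β := by
    have := Finset.sum_filter_add_sum_filter_not Finset.univ
      (fun β : T.Node => T.children β = ∅) g
    linarith
  -- leaves sum
  have hleaf : ∑ β ∈ Finset.univ.filter (fun β : T.Node => T.children β = ∅), g β
      = ∑ v : V, deg W v * Real.logb 2 (deg W v) := by
    refine Finset.sum_nbij' (i := T.vertOf) (j := T.leafOf) ?_ ?_ ?_ ?_ ?_
    · intro a _; exact Finset.mem_univ _
    · intro v _
      simp only [Finset.mem_filter, Finset.mem_univ, true_and]
      exact (T.leafOf_spec v).1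
    · intro a ha
      simp only [Finset.mem_filter, Finset.mem_univ, true_and] at ha
      exact (T.leafOf_eq ha (T.label_leaf_eq ha)).symm
    · intro v _
      have h := (T.leafOf_spec v).2
      have hm := T.vertOf_mem (T.leafOf v)
      rw [h, Finset.mem_singleton] at hm
      exact hm
    · intro a ha
      simp only [Finset.mem_filter, Finset.mem_univ, true_and] at ha
      have := T.label_leaf_eq ha
      simp only [hg, hf, this, vol, Finset.sum_singleton]
  have hgroot : g T.root = VG * Real.logb 2 VG := by
    simp only [hg, hf, T.label_root]
    rfl
  have htel : ∑ α ∈ Finset.univ.filter (fun α => α ≠ T.root),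
      vol W (T.label α) * (f (T.parent α) - f α)
      = VG * Real.logb 2 VG - ∑ v : V, deg W v * Real.logb 2 (deg W v) := by
    have : ∑ α ∈ Finset.univ.filter (fun α => α ≠ T.root),
        vol W (T.label α) * (f (T.parent α) - f α)
        = (∑ α ∈ Finset.univ.filter (fun α => α ≠ T.root), vol W (T.label α) * f (T.parent α))
          - ∑ α ∈ Finset.univ.filter (fun α => α ≠ T.root), vol W (T.label α) * f α := by
      rw [← Finset.sum_sub_distrib]
      exact Finset.sum_congr rfl (fun α _ => by ring)
    rw [this, h1, h2, h3, hleaf, hgroot]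
    ring
  -- H1 identity
  have hdegsum : ∑ v : V, deg W v = VG := rfl
  have hH1 : VG * H1 W = VG * Real.logb 2 VG - ∑ v : V, deg W v * Real.logb 2 (deg W v) := by
    unfold H1
    rw [mul_neg, Finset.mul_sum]
    have : ∀ v ∈ Finset.univ, VG * ((deg W v / VG) * Real.logb 2 (deg W v / VG))
        = deg W v * Real.logb 2 (deg W v) - deg W v * Real.logb 2 VG := by
      intro v _
      rw [Real.logb_div (hdeg v).ne' hVG.ne']
      field_simp
    rw [Finset.sum_congr rfl this, Finset.sum_sub_distrib, ← Finset.sum_mul, hdegsum]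
    ring
  -- H1 positive
  have hH1pos : 0 < H1 W := by
    obtain ⟨i, j, hij⟩ := Fintype.exists_pair_of_one_lt_card (α := V) (by omega)
    have hdle : ∀ v : V, deg W v ≤ VG :=
      fun v => Finset.single_le_sum (f := deg W) (fun k _ => (hdeg k).le) (Finset.mem_univ v)
    have hdlt : deg W i < VG := by
      have hsub : ({i, j} : Finset V) ⊆ Finset.univ := Finset.subset_univ _
      have : deg W i + deg W j ≤ VG := by
        have := Finset.sum_le_sum_of_subset_of_nonneg (f := deg W) hsub
          (fun k _ _ => (hdeg k).le)
        rwa [Finset.sum_pair hij] at this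
      linarith [hdeg j]
    unfold H1
    rw [neg_pos]
    have hterm : ∀ v ∈ Finset.univ,
        (deg W v / VG) * Real.logb 2 (deg W v / VG) ≤ 0 := by
      intro v _
      apply mul_nonpos_of_nonneg_of_nonpos (div_nonneg (hdeg v).le hVG.le)
      exact Real.logb_nonpos one_lt_two (div_nonneg (hdeg v).le hVG.le)
        ((div_le_one hVG).mpr (hdle v))
    have hstrict : (deg W i / VG) * Real.logb 2 (deg W i / VG) < 0 := by
      apply mul_neg_of_pos_of_neg (div_pos (hdeg i) hVG)
      exact Real.logb_neg one_lt_two (div_pos (hdeg i) hVG) ((div_lt_one hVG).mpr hdlt)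
    calc ∑ v : V, (deg W v / VG) * Real.logb 2 (deg W v / VG)
        < ∑ v : V, (0 : ℝ) := by
          apply Finset.sum_lt_sum hterm ⟨i, Finset.mem_univ i, hstrict⟩
      _ = 0 := Finset.sum_const_zero
  -- main inequality
  have key : conductance W * H1 W ≤ SE W T := by
    have hTel : conductance W * H1 W = ∑ α ∈ Finset.univ.filter (fun α => α ≠ T.root),
        (conductance W / VG) * (vol W (T.label α) * (f (T.parent α) - f α)) := by
      rw [← Finset.mul_sum, htel, ← hH1]
      field_simp
    rw [hTel, hSE]
    refine Finset.sum_le_sum (fun α hα => ?_)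
    have hαr : α ≠ T.root := (Finset.mem_filter.mp hα).2
    have hx : 0 ≤ f (T.parent α) - f α := sub_nonneg.mpr (hfmono α hαr)
    have h := mul_le_mul_of_nonneg_right (hcond α hαr) hx
    calc conductance W / VG * (vol W (T.label α) * (f (T.parent α) - f α))
        = (conductance W * vol W (T.label α)) * (f (T.parent α) - f α) / VG := by ring
      _ ≤ (cut W (T.label α)) * (f (T.parent α) - f α) / VG := by gcongr
      _ = cut W (T.label α) / VG * (f (T.parent α) - f α) := by ring
  exact (le_div_iff₀ hH1pos).mpr key
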